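/- (Superposition principle for 1 < p ≤ 2.) Let N ≥ 2 be an integer, p a real number with 1 < p ≤ 2, 0 < r₀ < R₀ ≤ ∞, and let V be a continuous function on (r₀, R₀) with V ≥ 0. Let u, v be C² functions on (r₀, R₀) such that 0 < v(r) ≤ u(r) and either u'(r) < v'(r) < 0 for all r, or u'(r) > v'(r) > 0 for all r. If u is a radial supersolution and v is a radial subsolution of −Δ_p u − V|u|^{p−2}u = 0, then u − v is a radial supersolution of the same equation, i.e. −|u'(r) − v'(r)|^{p−2}·L(u−v)(r) − V(r)·(u(r) − v(r))^{p−1} ≥ 0 for all r ∈ (r₀, R₀). -/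

import Mathlib

/-- The ordinary differential operator `L u (r) = (p-1) u''(r) + ((N-1)/r) u'(r)`,
so that for a radial function the p-Laplacian is `Δ_p u = |u'(r)|^{p-2} L u (r)`. -/
noncomputable def Lrad (N : ℕ) (p : ℝ) (u : ℝ → ℝ) (r : ℝ) : ℝ :=
  (p - 1) * deriv (deriv u) r + (((N : ℝ) - 1) / r) * deriv u r

/-!
Write `A = |u'|`, `B = |v'|`, `D = |u' - v'|`; the sign condition on the derivatives gives
`A = D + B`. Dividing the two differential inequalities by `A^{p-2}` and `B^{p-2}` yields
`L v - L u ≥ V (u^{p-1} A^{2-p} - v^{p-1} B^{2-p})`, and since `p - 1 ∈ [0, 1]` the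
`1`-homogeneous concave map `(x, y) ↦ x^{p-1} y^{2-p}` is superadditive, so that this is at least
`V (u - v)^{p-1} D^{2-p}`. Multiplying by `D^{p-2}` gives the supersolution inequality for `u - v`.
-/

open Filter Topology

namespace Real

lemma rpow_mul_rpow_le_mul_weighted_mean {α x y X Y : ℝ} (hα₀ : 0 ≤ α) (hα₁ : α ≤ 1)
    (hx : 0 ≤ x) (hy : 0 ≤ y) (hX : 0 < X) (hY : 0 < Y) :
    x ^ α * y ^ (1 - α) ≤ X ^ α * Y ^ (1 - α) * (α * (x / X) + (1 - α) * (y / Y)) := by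
  have hmean : (x / X) ^ α * (y / Y) ^ (1 - α) ≤ α * (x / X) + (1 - α) * (y / Y) :=
    geom_mean_le_arith_mean2_weighted hα₀ (by linarith) (by positivity) (by positivity)
      (by ring)
  rw [div_rpow hx hX.le, div_rpow hy hY.le, div_mul_div_comm,
    div_le_iff₀ (by positivity)] at hmean
  linarith

lemma rpow_mul_rpow_add_rpow_mul_rpow_le {α x₁ x₂ y₁ y₂ : ℝ} (hα₀ : 0 ≤ α) (hα₁ : α ≤ 1)
    (hx₁ : 0 ≤ x₁) (hx₂ : 0 ≤ x₂) (hy₁ : 0 ≤ y₁) (hy₂ : 0 ≤ y₂)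
    (hx : 0 < x₁ + x₂) (hy : 0 < y₁ + y₂) :
    x₁ ^ α * y₁ ^ (1 - α) + x₂ ^ α * y₂ ^ (1 - α) ≤
      (x₁ + x₂) ^ α * (y₁ + y₂) ^ (1 - α) := by
  have h₁ := rpow_mul_rpow_le_mul_weighted_mean hα₀ hα₁ hx₁ hy₁ hx hy
  have h₂ := rpow_mul_rpow_le_mul_weighted_mean hα₀ hα₁ hx₂ hy₂ hx hy
  have hweights : α * (x₁ / (x₁ + x₂)) + (1 - α) * (y₁ / (y₁ + y₂)) +
      (α * (x₂ / (x₁ + x₂)) + (1 - α) * (y₂ / (y₁ + y₂))) = 1 := by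
    field_simp
    ring
  calc x₁ ^ α * y₁ ^ (1 - α) + x₂ ^ α * y₂ ^ (1 - α)
      ≤ (x₁ + x₂) ^ α * (y₁ + y₂) ^ (1 - α) *
          (α * (x₁ / (x₁ + x₂)) + (1 - α) * (y₁ / (y₁ + y₂)) +
            (α * (x₂ / (x₁ + x₂)) + (1 - α) * (y₂ / (y₁ + y₂)))) := by
        rw [mul_add]; exact add_le_add h₁ h₂
    _ = (x₁ + x₂) ^ α * (y₁ + y₂) ^ (1 - α) := by rw [hweights, mul_one]

lemma rpow_sub_two_mul_le_iff {A : ℝ} (hA : 0 < A) (p L c : ℝ) :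
    A ^ (p - 2) * L ≤ c ↔ L ≤ A ^ (2 - p) * c := by
  rw [show p - 2 = -(2 - p) by ring, rpow_neg hA.le, inv_mul_le_iff₀ (by positivity)]

lemma le_rpow_sub_two_mul_iff {A : ℝ} (hA : 0 < A) (p L c : ℝ) :
    c ≤ A ^ (p - 2) * L ↔ A ^ (2 - p) * c ≤ L := by
  rw [show p - 2 = -(2 - p) by ring, rpow_neg hA.le, le_inv_mul_iff₀ (by positivity)]

lemma abs_rpow_sub_two_mul_self {w : ℝ} (hw : 0 < w) (p : ℝ) :
    |w| ^ (p - 2) * w = w ^ (p - 1) := by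
  rw [abs_of_pos hw, ← rpow_add_one hw.ne']
  ring_nf

end Real

open Real

lemma abs_sub_add_abs_eq_abs {a b : ℝ} (h : a < b ∧ b < 0 ∨ b < a ∧ 0 < b) :
    0 < |b| ∧ 0 < |a - b| ∧ |a - b| + |b| = |a| := by
  rcases h with ⟨hab, hb⟩ | ⟨hba, hb⟩
  · rw [abs_of_neg hb, abs_of_neg (sub_neg.2 hab), abs_of_neg (hab.trans hb)]
    exact ⟨by linarith, by linarith, by ring⟩
  · rw [abs_of_pos hb, abs_of_pos (sub_pos.2 hba), abs_of_pos (hb.trans hba)]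
    exact ⟨hb, by linarith, by ring⟩

lemma Lrad_sub {N : ℕ} {p : ℝ} {u v : ℝ → ℝ} {r : ℝ}
    (hu : ContDiffAt ℝ 2 u r) (hv : ContDiffAt ℝ 2 v r) :
    Lrad N p (fun s => u s - v s) r = Lrad N p u r - Lrad N p v r := by
  have hderiv : deriv (fun s => u s - v s) =ᶠ[𝓝 r] fun s => deriv u s - deriv v s := by
    filter_upwards [hu.eventually (by simp), hv.eventually (by simp)] with s hus hvs
    exact deriv_fun_sub (hus.differentiableAt (by simp)) (hvs.differentiableAt (by simp))
  have hu' := (hu.derivWithin (m := 1) (by norm_num)).differentiableAt (by simp)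
  have hv' := (hv.derivWithin (m := 1) (by norm_num)).differentiableAt (by simp)
  rw [Lrad, Lrad, Lrad, hderiv.deriv_eq, hderiv.eq_of_nhds, deriv_fun_sub hu' hv']
  ring

/-- At a point, `B`, `D`, `U`, `W`, `Lu`, `Lw` stand for `|v'|`, `|u' - v'|`, `u`, `v`, `L u`,
`L v`, so that `D + B = |u'|`. -/
lemma superposition_pointwise {p V U W B D Lu Lw : ℝ} (hp₁ : 1 ≤ p) (hp₂ : p ≤ 2)
    (hV : 0 ≤ V) (hW : 0 < W) (hWU : W ≤ U) (hB : 0 < B) (hD : 0 < D)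
    (hsup : (D + B) ^ (p - 2) * Lu ≤ -(V * U ^ (p - 1)))
    (hsub : -(V * W ^ (p - 1)) ≤ B ^ (p - 2) * Lw) :
    V * (U - W) ^ (p - 1) ≤ D ^ (p - 2) * (Lw - Lu) := by
  rw [rpow_sub_two_mul_le_iff (by positivity)] at hsup
  rw [le_rpow_sub_two_mul_iff hB] at hsub
  rw [le_rpow_sub_two_mul_iff hD]
  have hsuperadd := rpow_mul_rpow_add_rpow_mul_rpow_le (α := p - 1) (by linarith) (by linarith)
    (sub_nonneg.2 hWU) hW.le hD.le hB.le (by linarith) (by linarith)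
  rw [show 1 - (p - 1) = 2 - p by ring, sub_add_cancel] at hsuperadd
  calc D ^ (2 - p) * (V * (U - W) ^ (p - 1))
      = V * ((U - W) ^ (p - 1) * D ^ (2 - p)) := by ring
    _ ≤ V * (U ^ (p - 1) * (D + B) ^ (2 - p) - W ^ (p - 1) * B ^ (2 - p)) :=
        mul_le_mul_of_nonneg_left (by linarith) hV
    _ ≤ Lw - Lu := by linarith

theorem superposition_p_le_two_general (N : ℕ) (p : ℝ) (hp1 : 1 < p) (hp2 : p ≤ 2)
    (r₀ : ℝ) (R₀ : EReal)
    (V u v : ℝ → ℝ)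
    (hV : ∀ r : ℝ, r₀ < r → (r : EReal) < R₀ → 0 ≤ V r)
    (hu : ContDiffOn ℝ 2 u {r : ℝ | r₀ < r ∧ (r : EReal) < R₀})
    (hv : ContDiffOn ℝ 2 v {r : ℝ | r₀ < r ∧ (r : EReal) < R₀})
    (hvu : ∀ r : ℝ, r₀ < r → (r : EReal) < R₀ → 0 < v r ∧ v r ≤ u r)
    (hder : (∀ r : ℝ, r₀ < r → (r : EReal) < R₀ → deriv u r < deriv v r ∧ deriv v r < 0) ∨
            (∀ r : ℝ, r₀ < r → (r : EReal) < R₀ → deriv v r < deriv u r ∧ 0 < deriv v r))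
    (hsup : ∀ r : ℝ, r₀ < r → (r : EReal) < R₀ →
      0 ≤ -(|deriv u r| ^ (p - 2) * Lrad N p u r) - V r * (|u r| ^ (p - 2) * u r))
    (hsub : ∀ r : ℝ, r₀ < r → (r : EReal) < R₀ →
      -(|deriv v r| ^ (p - 2) * Lrad N p v r) - V r * (|v r| ^ (p - 2) * v r) ≤ 0) :
    ∀ r : ℝ, r₀ < r → (r : EReal) < R₀ →
      0 ≤ -(|deriv u r - deriv v r| ^ (p - 2) * Lrad N p (fun s => u s - v s) r)
        - V r * (u r - v r) ^ (p - 1) := by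
  intro r hr₀ hR₀
  have hopen : IsOpen {r : ℝ | r₀ < r ∧ (r : EReal) < R₀} :=
    isOpen_Ioi.inter (isOpen_Iio.preimage continuous_coe_real_ereal)
  have hmem := hopen.mem_nhds ⟨hr₀, hR₀⟩
  obtain ⟨hv₀, hv_le_u⟩ := hvu r hr₀ hR₀
  obtain ⟨hB, hD, hDB⟩ :=
    abs_sub_add_abs_eq_abs (hder.imp (· r hr₀ hR₀) (· r hr₀ hR₀))
  specialize hsup r hr₀ hR₀
  specialize hsub r hr₀ hR₀
  rw [abs_rpow_sub_two_mul_self (hv₀.trans_le hv_le_u), ← hDB] at hsup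
  rw [abs_rpow_sub_two_mul_self hv₀] at hsub
  have := superposition_pointwise (Lu := Lrad N p u r) (Lw := Lrad N p v r) hp1.le hp2
    (hV r hr₀ hR₀) hv₀ hv_le_u hB hD (by linarith) (by linarith)
  rw [Lrad_sub (hu.contDiffAt hmem) (hv.contDiffAt hmem)]
  linarith

/-- Superposition principle for `1 < p ≤ 2`: if `u` is a radial supersolution and `v`
a radial subsolution of `-Δ_p u - V |u|^{p-2} u = 0` on `(r₀, R₀)`, with `0 < v ≤ u`,
`V ≥ 0`, and either `u' < v' < 0` everywhere or `u' > v' > 0` everywhere,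
then `u - v` is a radial supersolution. -/
theorem superposition_p_le_two (N : ℕ) (hN : 2 ≤ N) (p : ℝ) (hp1 : 1 < p) (hp2 : p ≤ 2)
    (r₀ : ℝ) (R₀ : EReal) (hr₀ : 0 < r₀) (hR : (r₀ : EReal) < R₀)
    (V u v : ℝ → ℝ)
    (hVcont : ContinuousOn V {r : ℝ | r₀ < r ∧ (r : EReal) < R₀})
    (hV : ∀ r : ℝ, r₀ < r → (r : EReal) < R₀ → 0 ≤ V r)
    (hu : ContDiffOn ℝ 2 u {r : ℝ | r₀ < r ∧ (r : EReal) < R₀})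
    (hv : ContDiffOn ℝ 2 v {r : ℝ | r₀ < r ∧ (r : EReal) < R₀})
    (hvu : ∀ r : ℝ, r₀ < r → (r : EReal) < R₀ → 0 < v r ∧ v r ≤ u r)
    (hder : (∀ r : ℝ, r₀ < r → (r : EReal) < R₀ → deriv u r < deriv v r ∧ deriv v r < 0) ∨
            (∀ r : ℝ, r₀ < r → (r : EReal) < R₀ → deriv v r < deriv u r ∧ 0 < deriv v r))
    (hsup : ∀ r : ℝ, r₀ < r → (r : EReal) < R₀ →
      0 ≤ -(|deriv u r| ^ (p - 2) * Lrad N p u r) - V r * (|u r| ^ (p - 2) * u r))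
    (hsub : ∀ r : ℝ, r₀ < r → (r : EReal) < R₀ →
      -(|deriv v r| ^ (p - 2) * Lrad N p v r) - V r * (|v r| ^ (p - 2) * v r) ≤ 0) :
    ∀ r : ℝ, r₀ < r → (r : EReal) < R₀ →
      0 ≤ -(|deriv u r - deriv v r| ^ (p - 2) * Lrad N p (fun s => u s - v s) r)
        - V r * (u r - v r) ^ (p - 1) :=
  superposition_p_le_two_general N p hp1 hp2 r₀ R₀ V u v hV hu hv hvu hder hsup hsub
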